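/- arXiv:0904.1556 — 3 statements merged into one kernel-verified Lean document; each statement's English description precedes it below -/
import Mathlib

section
/- The map φ : U(1) × SU(2) × SU(3) → SU(5) sending (α, g, h) to the 5×5 block diagonal matrix with upper-left 2×2 block α³·g and lower-right 3×3 block α⁻²·h is a well-defined group homomorphism, and its kernel is exactly the set {(α, α⁻³·1₂, α²·1₃) : α ∈ ℂ, α⁶ = 1}, where 1₂ and 1₃ denote the 2×2 and 3×3 identity matrices. -/
open Matrix

noncomputable section

/-- The special unitary group `SU(n)`: `n × n` complex unitary matrices of determinant 1,
as a subgroup of the unitary group. -/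
def SU (n : ℕ) : Subgroup (Matrix.unitaryGroup (Fin n) ℂ) where
  carrier := {U | (U : Matrix (Fin n) (Fin n) ℂ).det = 1}
  mul_mem' := by
    intro a b ha hb
    simp only [Set.mem_setOf_eq, Matrix.UnitaryGroup.mul_val, Matrix.det_mul] at *
    rw [ha, hb, mul_one]
  one_mem' := by simp
  inv_mem' := by
    intro a ha
    simp only [Set.mem_setOf_eq, Matrix.UnitaryGroup.inv_val] at *
    rw [Matrix.star_eq_conjTranspose, Matrix.det_conjTranspose, ha, star_one]

/-- The underlying matrix of an element of `SU(n)`. -/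
def suMat {n : ℕ} (g : SU n) : Matrix (Fin n) (Fin n) ℂ := g.1.1

/-- The Standard Model gauge group `U(1) × SU(2) × SU(3)`, where `U(1)` is the circle
group `unitary ℂ = {α : ℂ | |α| = 1}`. -/
abbrev GSM : Type := unitary ℂ × SU 2 × SU 3

/-- The 5×5 block diagonal matrix with upper-left 2×2 block `α³ • g` and lower-right
3×3 block `α⁻² • h`, for `(α, g, h)` in the Standard Model gauge group. -/
def phiMat (x : GSM) : Matrix (Fin 5) (Fin 5) ℂ :=
  Matrix.reindex finSumFinEquiv finSumFinEquiv
    (Matrix.fromBlocks (((x.1 : ℂ) ^ 3) • suMat x.2.1) 0 0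
      ((((x.1 : ℂ) ^ 2)⁻¹) • suMat x.2.2))

-- auxiliary lemmas

lemma star_mul_self_unit (α : unitary ℂ) : star (α : ℂ) * (α : ℂ) = 1 :=
  (Unitary.mem_iff.mp α.2).1

lemma unit_ne_zero (α : unitary ℂ) : (α : ℂ) ≠ 0 := by
  intro h0
  have h := star_mul_self_unit α
  rw [h0] at h
  simp at h

lemma star_unit (α : unitary ℂ) : star (α : ℂ) = (α : ℂ)⁻¹ :=
  (inv_eq_of_mul_eq_one_left (star_mul_self_unit α)).symm

lemma smul_mem_unitaryGroup {n : Type*} [Fintype n] [DecidableEq n]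
    (c : ℂ) (hc : star c * c = 1) {U : Matrix n n ℂ} (hU : U ∈ Matrix.unitaryGroup n ℂ) :
    c • U ∈ Matrix.unitaryGroup n ℂ := by
  rw [Matrix.mem_unitaryGroup_iff'] at hU ⊢
  rw [Matrix.star_eq_conjTranspose, Matrix.conjTranspose_smul, Matrix.smul_mul, Matrix.mul_smul,
    ← Matrix.star_eq_conjTranspose, hU, smul_smul, hc, one_smul]

def blockMat (x : GSM) : Matrix (Fin 2 ⊕ Fin 3) (Fin 2 ⊕ Fin 3) ℂ :=
  Matrix.fromBlocks (((x.1 : ℂ) ^ 3) • suMat x.2.1) 0 0 ((((x.1 : ℂ) ^ 2)⁻¹) • suMat x.2.2)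

lemma star_cube (α : unitary ℂ) : star ((α : ℂ) ^ 3) * (α : ℂ) ^ 3 = 1 := by
  rw [star_pow, star_unit, ← mul_pow, inv_mul_cancel₀ (unit_ne_zero α), one_pow]

lemma star_invsq (α : unitary ℂ) : star (((α : ℂ) ^ 2)⁻¹) * ((α : ℂ) ^ 2)⁻¹ = 1 := by
  rw [star_inv₀, ← mul_inv, mul_comm, star_pow, star_unit, ← mul_pow,
    mul_inv_cancel₀ (unit_ne_zero α), one_pow, inv_one]

lemma blockMat_unitary (x : GSM) : blockMat x ∈ Matrix.unitaryGroup (Fin 2 ⊕ Fin 3) ℂ := by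
  have hA : star (((x.1 : ℂ) ^ 3) • suMat x.2.1) * (((x.1 : ℂ) ^ 3) • suMat x.2.1) = 1 :=
    Matrix.mem_unitaryGroup_iff'.mp (smul_mem_unitaryGroup _ (star_cube x.1) x.2.1.1.2)
  have hD : star ((((x.1 : ℂ) ^ 2)⁻¹) • suMat x.2.2) * ((((x.1 : ℂ) ^ 2)⁻¹) • suMat x.2.2) = 1 :=
    Matrix.mem_unitaryGroup_iff'.mp (smul_mem_unitaryGroup _ (star_invsq x.1) x.2.2.1.2)
  rw [Matrix.mem_unitaryGroup_iff']
  rw [blockMat, Matrix.star_eq_conjTranspose, Matrix.fromBlocks_conjTranspose,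
    Matrix.fromBlocks_multiply]
  simp only [Matrix.conjTranspose_zero, Matrix.mul_zero, Matrix.zero_mul, add_zero, zero_add]
  rw [← Matrix.star_eq_conjTranspose, ← Matrix.star_eq_conjTranspose, hA, hD,
    Matrix.fromBlocks_one]

lemma star_reindexAE (M : Matrix (Fin 2 ⊕ Fin 3) (Fin 2 ⊕ Fin 3) ℂ) :
    star (Matrix.reindexAlgEquiv ℂ ℂ finSumFinEquiv M)
      = Matrix.reindexAlgEquiv ℂ ℂ finSumFinEquiv (star M) := by
  simp [Matrix.star_eq_conjTranspose, Matrix.conjTranspose_reindex]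

lemma phiMat_eq (x : GSM) : phiMat x = Matrix.reindexAlgEquiv ℂ ℂ finSumFinEquiv (blockMat x) :=
  rfl

lemma phiMat_unitary (x : GSM) : phiMat x ∈ Matrix.unitaryGroup (Fin 5) ℂ := by
  have h := Matrix.mem_unitaryGroup_iff'.mp (blockMat_unitary x)
  rw [Matrix.mem_unitaryGroup_iff', phiMat_eq, star_reindexAE, ← _root_.map_mul, h,
    _root_.map_one]

lemma phiMat_det (x : GSM) : (phiMat x).det = 1 := by
  rw [phiMat, Matrix.det_reindex_self, Matrix.det_fromBlocks_zero₂₁,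
    Matrix.det_smul, Matrix.det_smul]
  have h2 : (suMat x.2.1).det = 1 := x.2.1.2
  have h3 : (suMat x.2.2).det = 1 := x.2.2.2
  rw [h2, h3, mul_one, mul_one, Fintype.card_fin, Fintype.card_fin, inv_pow, ← pow_mul,
    ← pow_mul]
  norm_num
  exact mul_inv_cancel₀ (pow_ne_zero _ (unit_ne_zero x.1))

set_option maxRecDepth 10000 in
def phiSU (x : GSM) : SU 5 := ⟨⟨phiMat x, phiMat_unitary x⟩, phiMat_det x⟩

lemma phi_map_mul (x y : GSM) : phiSU (x * y) = phiSU x * phiSU y := by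
  apply Subtype.ext; apply Subtype.ext
  show phiMat (x * y) = phiMat x * phiMat y
  rw [phiMat_eq, phiMat_eq, phiMat_eq, ← _root_.map_mul]
  congr 1
  rw [blockMat, blockMat, blockMat, Matrix.fromBlocks_multiply]
  have hm2 : suMat (x * y).2.1 = suMat x.2.1 * suMat y.2.1 := rfl
  have hm3 : suMat (x * y).2.2 = suMat x.2.2 * suMat y.2.2 := rfl
  simp only [hm2, hm3, Matrix.mul_zero, Matrix.zero_mul, add_zero,
    zero_add, Matrix.smul_mul, Matrix.mul_smul, smul_smul, smul_zero]
  have c3 : (((x * y).1 : ℂ)) ^ 3 = (y.1 : ℂ) ^ 3 * (x.1 : ℂ) ^ 3 := by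
    rw [show ((x * y).1 : ℂ) = (x.1 : ℂ) * (y.1 : ℂ) from rfl, mul_pow, mul_comm]
  have c2 : ((((x * y).1 : ℂ)) ^ 2)⁻¹ = ((y.1 : ℂ) ^ 2)⁻¹ * ((x.1 : ℂ) ^ 2)⁻¹ := by
    rw [show ((x * y).1 : ℂ) = (x.1 : ℂ) * (y.1 : ℂ) from rfl, mul_pow, mul_inv, mul_comm]
  rw [c3, c2]

lemma blockMat_one : blockMat (1 : GSM) = 1 := by
  have h1 : suMat ((1 : GSM).2.1) = 1 := rfl
  have h2 : suMat ((1 : GSM).2.2) = 1 := rfl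
  have hc : (((1 : GSM).1 : ℂ)) = 1 := rfl
  rw [blockMat, h1, h2, hc]
  norm_num [Matrix.fromBlocks_one]

def phiHom : GSM →* SU 5 where
  toFun := phiSU
  map_one' := by
    apply Subtype.ext; apply Subtype.ext
    show phiMat 1 = 1
    rw [phiMat_eq, blockMat_one, _root_.map_one]
  map_mul' := phi_map_mul

/-- the map `φ(α, g, h) = blockdiag(α³g, α⁻²h)` is a well-defined group
homomorphism `U(1) × SU(2) × SU(3) → SU(5)`, and its kernel is exactly
`{(α, α⁻³·1₂, α²·1₃) : α⁶ = 1}`. -/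
theorem su5_phi_well_defined_and_kernel :
    ∃ φ : GSM →* SU 5,
      (∀ x : GSM, suMat (φ x) = phiMat x) ∧
      (∀ x : GSM, x ∈ φ.ker ↔
        ∃ α : unitary ℂ, (α : ℂ) ^ 6 = 1 ∧ x.1 = α ∧
          suMat x.2.1 = (((α : ℂ) ^ 3)⁻¹) • (1 : Matrix (Fin 2) (Fin 2) ℂ) ∧
          suMat x.2.2 = ((α : ℂ) ^ 2) • (1 : Matrix (Fin 3) (Fin 3) ℂ)) := by
  refine ⟨phiHom, fun x => rfl, fun x => ?_⟩
  have hker : x ∈ phiHom.ker ↔ phiMat x = 1 := by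
    rw [MonoidHom.mem_ker]
    constructor
    · intro h
      have : suMat (phiHom x) = suMat 1 := by rw [h]
      exact this
    · intro h
      apply Subtype.ext; apply Subtype.ext
      exact h
  have hblock : phiMat x = 1 ↔ blockMat x = 1 := by
    constructor
    · intro h
      have h2 := (Matrix.reindexAlgEquiv ℂ ℂ finSumFinEquiv).injective
        (a₁ := blockMat x) (a₂ := 1)
      rw [_root_.map_one] at h2
      exact h2 h
    · intro h
      rw [phiMat_eq, h, _root_.map_one]
  rw [hker, hblock]
  have hαne := unit_ne_zero x.1
  constructor
  · intro h
    rw [blockMat, ← Matrix.fromBlocks_one, Matrix.fromBlocks_inj] at h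
    obtain ⟨hA, -, -, hD⟩ := h
    have hg : suMat x.2.1 = (((x.1 : ℂ) ^ 3)⁻¹) • 1 := by
      rw [← hA, smul_smul, inv_mul_cancel₀ (pow_ne_zero _ hαne), one_smul]
    have hh : suMat x.2.2 = ((x.1 : ℂ) ^ 2) • 1 := by
      rw [← hD, smul_smul, mul_inv_cancel₀ (pow_ne_zero _ hαne), one_smul]
    refine ⟨x.1, ?_, rfl, hg, hh⟩
    have hdet : (suMat x.2.1).det = 1 := x.2.1.2
    rw [hg, Matrix.det_smul, Matrix.det_one, mul_one, Fintype.card_fin, inv_pow,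
      ← pow_mul] at hdet
    norm_num at hdet
    exact hdet
  · rintro ⟨α, hα6, hx1, hg, hh⟩
    rw [blockMat, ← Matrix.fromBlocks_one, Matrix.fromBlocks_inj]
    refine ⟨?_, rfl, rfl, ?_⟩
    · rw [hg, hx1, smul_smul, mul_inv_cancel₀ (pow_ne_zero _ (unit_ne_zero α)), one_smul]
    · rw [hh, hx1, smul_smul, inv_mul_cancel₀ (pow_ne_zero _ (unit_ne_zero α)), one_smul]
end
end

section
/- The image of the homomorphism φ : U(1) × SU(2) × SU(3) → SU(5), φ(α, g, h) = block diag(α³·g, α⁻²·h), is exactly the subgroup S(U(2) × U(3)) of SU(5) consisting of all block diagonal matrices diag(A, B) with A a 2×2 unitary matrix, B a 3×3 unitary matrix, and det(A)·det(B) = 1. Consequently φ induces a group isomorphism (U(1) × SU(2) × SU(3))/ker φ ≅ S(U(2) × U(3)). -/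
open Matrix

noncomputable section

set_option maxRecDepth 8000

-- auxiliary lemmas
lemma my_reindex_mul (M N : Matrix (Fin 2 ⊕ Fin 3) (Fin 2 ⊕ Fin 3) ℂ) :
    (Matrix.reindex finSumFinEquiv finSumFinEquiv M) *
      (Matrix.reindex finSumFinEquiv finSumFinEquiv N) =
      Matrix.reindex finSumFinEquiv finSumFinEquiv (M * N) := by
  simp [Matrix.reindex_apply, Matrix.submatrix_mul_equiv]

lemma my_star_reindex (M : Matrix (Fin 2 ⊕ Fin 3) (Fin 2 ⊕ Fin 3) ℂ) :
    star (Matrix.reindex finSumFinEquiv finSumFinEquiv M) =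
      Matrix.reindex finSumFinEquiv finSumFinEquiv (star M) := by
  simp [Matrix.reindex_apply, Matrix.star_eq_conjTranspose, Matrix.conjTranspose_submatrix]

lemma my_unit_pow (α : ℂ) (h : star α * α = 1) (k : ℕ) : star (α ^ k) * α ^ k = 1 := by
  rw [star_pow, ← mul_pow, h, one_pow]

lemma my_unit_inv (c : ℂ) (h : star c * c = 1) : star c⁻¹ * c⁻¹ = 1 := by
  rw [star_inv₀, ← mul_inv, h]
  norm_num

lemma my_unit_ne_zero (c : ℂ) (h : star c * c = 1) : c ≠ 0 := by
  intro hc; rw [hc, mul_zero] at h; exact zero_ne_one h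

lemma my_smul_unitary {n : ℕ} {c : ℂ} (hc : star c * c = 1)
    {U : Matrix (Fin n) (Fin n) ℂ} (hU : U ∈ Matrix.unitaryGroup (Fin n) ℂ) :
    c • U ∈ Matrix.unitaryGroup (Fin n) ℂ := by
  rw [Matrix.mem_unitaryGroup_iff'] at *
  rw [Matrix.star_eq_conjTranspose, Matrix.conjTranspose_smul, Matrix.smul_mul,
    Matrix.mul_smul, smul_smul, hc, one_smul, ← Matrix.star_eq_conjTranspose, hU]

lemma my_block_unitary {A : Matrix (Fin 2) (Fin 2) ℂ} {B : Matrix (Fin 3) (Fin 3) ℂ}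
    (hA : A ∈ Matrix.unitaryGroup (Fin 2) ℂ) (hB : B ∈ Matrix.unitaryGroup (Fin 3) ℂ) :
    (Matrix.reindex finSumFinEquiv finSumFinEquiv (Matrix.fromBlocks A 0 0 B)) ∈
      Matrix.unitaryGroup (Fin 5) ℂ := by
  rw [Matrix.mem_unitaryGroup_iff'] at *
  rw [my_star_reindex, my_reindex_mul]
  rw [Matrix.star_eq_conjTranspose] at hA hB ⊢
  rw [Matrix.fromBlocks_conjTranspose]
  simp only [Matrix.fromBlocks_multiply, Matrix.conjTranspose_zero, Matrix.mul_zero,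
    Matrix.zero_mul, add_zero, zero_add, hA, hB]
  rw [Matrix.fromBlocks_one, Matrix.reindex_apply, Matrix.submatrix_one_equiv]

lemma my_block_det (A : Matrix (Fin 2) (Fin 2) ℂ) (B : Matrix (Fin 3) (Fin 3) ℂ) :
    (Matrix.reindex finSumFinEquiv finSumFinEquiv (Matrix.fromBlocks A 0 0 B)).det
      = A.det * B.det := by
  simp [Matrix.det_fromBlocks_zero₂₁]

lemma suMat_mem {n : ℕ} (g : SU n) : suMat g ∈ Matrix.unitaryGroup (Fin n) ℂ := g.1.2

lemma suMat_det {n : ℕ} (g : SU n) : (suMat g).det = 1 := g.2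

lemma SU_ext {n : ℕ} {a b : SU n} (h : suMat a = suMat b) : a = b :=
  Subtype.ext (Subtype.ext h)

lemma alpha_unit (x : GSM) : star (x.1 : ℂ) * (x.1 : ℂ) = 1 := x.1.2.1

def phiEl (x : GSM) : SU 5 := ⟨⟨phiMat x, phiMat_unitary x⟩, phiMat_det x⟩

lemma phiEl_mul (x y : GSM) : phiEl (x * y) = phiEl x * phiEl y := by
  apply SU_ext
  show phiMat (x * y) = phiMat x * phiMat y
  rw [phiMat, phiMat, phiMat, my_reindex_mul]
  congr 1
  rw [Matrix.fromBlocks_multiply]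
  have h1 : suMat ((x * y).2.1) = suMat x.2.1 * suMat y.2.1 := rfl
  have h2 : suMat ((x * y).2.2) = suMat x.2.2 * suMat y.2.2 := rfl
  have h3 : ((x * y).1 : ℂ) = (x.1 : ℂ) * (y.1 : ℂ) := rfl
  rw [h1, h2, h3]
  simp only [Matrix.smul_mul, Matrix.mul_smul, smul_smul, mul_pow, mul_inv,
    Matrix.mul_zero, Matrix.zero_mul, add_zero, zero_add, smul_zero]
  rw [mul_comm ((x.1 : ℂ) ^ 3), mul_comm (((x.1 : ℂ) ^ 2)⁻¹)]

def phi : GSM →* SU 5 := MonoidHom.mk' phiEl phiEl_mul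

/-- the image of `φ : U(1) × SU(2) × SU(3) → SU(5)`,
`φ(α,g,h) = blockdiag(α³g, α⁻²h)`, is exactly the subgroup `S(U(2) × U(3))` of `SU(5)`
consisting of block diagonal matrices `diag(A, B)` with `A ∈ U(2)`, `B ∈ U(3)` and
`det A · det B = 1`; consequently `φ` induces an isomorphism
`(U(1) × SU(2) × SU(3)) / ker φ ≅ S(U(2) × U(3))`. -/
theorem su5_phi_range_is_SU2xU3 :
    ∃ φ : GSM →* SU 5,
      (∀ x : GSM, suMat (φ x) = phiMat x) ∧
      (∀ y : SU 5, y ∈ φ.range ↔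
        ∃ (A : Matrix (Fin 2) (Fin 2) ℂ) (B : Matrix (Fin 3) (Fin 3) ℂ),
          A ∈ Matrix.unitaryGroup (Fin 2) ℂ ∧ B ∈ Matrix.unitaryGroup (Fin 3) ℂ ∧
          A.det * B.det = 1 ∧
          suMat y = Matrix.reindex finSumFinEquiv finSumFinEquiv
            (Matrix.fromBlocks A 0 0 B)) ∧
      Nonempty ((GSM ⧸ φ.ker) ≃* φ.range) := by
  refine ⟨phi, fun x => rfl, ?_, ⟨QuotientGroup.quotientKerEquivRange phi⟩⟩
  intro y
  constructor
  · rintro ⟨x, rfl⟩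
    refine ⟨((x.1 : ℂ) ^ 3) • suMat x.2.1, (((x.1 : ℂ) ^ 2)⁻¹) • suMat x.2.2,
      my_smul_unitary (my_unit_pow _ (alpha_unit x) 3) (suMat_mem x.2.1),
      my_smul_unitary (my_unit_inv _ (my_unit_pow _ (alpha_unit x) 2)) (suMat_mem x.2.2),
      ?_, rfl⟩
    have h := phiMat_det x
    rwa [phiMat, my_block_det] at h
  · rintro ⟨A, B, hA, hB, hdet, hy⟩
    obtain ⟨α, hα6⟩ := IsAlgClosed.exists_pow_nat_eq (A.det) (n := 6) (by norm_num)
    have hdetAu : star A.det * A.det = 1 := by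
      have h := congrArg Matrix.det (Matrix.mem_unitaryGroup_iff'.mp hA)
      rwa [Matrix.det_mul, Matrix.star_eq_conjTranspose, Matrix.det_conjTranspose,
        Matrix.det_one] at h
    have hαu : star α * α = 1 := by
      have h6 : (star α * α) ^ 6 = 1 := by
        rw [mul_pow, ← star_pow, hα6, hdetAu]
      have hns : star α * α = ((Complex.normSq α : ℝ) : ℂ) := by
        rw [Complex.star_def, mul_comm, Complex.mul_conj]
      rw [hns] at h6 ⊢
      have h6' : (Complex.normSq α) ^ 6 = (1:ℝ) ^ 6 := by
        have : ((Complex.normSq α ^ 6 : ℝ) : ℂ) = ((1:ℝ) : ℂ) := by push_cast; exact h6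
        rw [one_pow]; exact_mod_cast this
      have h1 : Complex.normSq α = 1 :=
        (pow_left_inj₀ (Complex.normSq_nonneg α) zero_le_one (by norm_num)).mp h6'
      rw [h1]; norm_num
    have hα0 : α ≠ 0 := my_unit_ne_zero _ hαu
    have hαu' : α * star α = 1 := by rw [mul_comm]; exact hαu
    -- build a preimage
    have hgU : (α ^ 3)⁻¹ • A ∈ Matrix.unitaryGroup (Fin 2) ℂ :=
      my_smul_unitary (my_unit_inv _ (my_unit_pow _ hαu 3)) hA
    have hhU : (α ^ 2) • B ∈ Matrix.unitaryGroup (Fin 3) ℂ :=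
      my_smul_unitary (my_unit_pow _ hαu 2) hB
    have hgdet : ((α ^ 3)⁻¹ • A).det = 1 := by
      rw [Matrix.det_smul, inv_pow, ← pow_mul]
      norm_num
      rw [← hα6]
      exact inv_mul_cancel₀ (pow_ne_zero 6 hα0)
    have hhdet : ((α ^ 2) • B).det = 1 := by
      rw [Matrix.det_smul, ← pow_mul]
      norm_num
      rw [hα6]
      exact hdet
    refine ⟨(⟨α, hαu, hαu'⟩, ⟨⟨_, hgU⟩, hgdet⟩, ⟨⟨_, hhU⟩, hhdet⟩), ?_⟩
    apply SU_ext
    have e1 : (α : ℂ) ^ 3 • ((α ^ 3)⁻¹ • A) = A := by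
      rw [smul_smul, mul_inv_cancel₀ (pow_ne_zero 3 hα0), one_smul]
    have e2 : ((α : ℂ) ^ 2)⁻¹ • ((α ^ 2) • B) = B := by
      rw [smul_smul, inv_mul_cancel₀ (pow_ne_zero 2 hα0), one_smul]
    show Matrix.reindex finSumFinEquiv finSumFinEquiv
        (Matrix.fromBlocks (α ^ 3 • ((α ^ 3)⁻¹ • A)) 0 0 ((α ^ 2)⁻¹ • (α ^ 2 • B))) = suMat y
    rw [e1, e2, hy]
end
end

section
/- Let r : U(5) → SO(10) be the interleaved realification, defined by (r(U))_{2j−1,2k−1} = Re U_{jk}, (r(U))_{2j−1,2k} = −Im U_{jk}, (r(U))_{2j,2k−1} = Im U_{jk}, (r(U))_{2j,2k} = Re U_{jk} for 1 ≤ j, k ≤ 5. Then inside SO(10), the intersection of r(SU(5)) with the block diagonal subgroup {diag(P, Q) : P ∈ SO(4), Q ∈ SO(6)} equals r(S(U(2) × U(3))), the image under r of the subgroup of SU(5) of block diagonal matrices diag(A, B) with A ∈ U(2), B ∈ U(3), det(A)·det(B) = 1. That is, the image of the Standard Model gauge group modulo its ℤ/6 kernel is exactly the intersection of SU(5) and SO(4)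 × SO(6) inside SO(10). -/
open Matrix

noncomputable section

set_option maxRecDepth 4000
set_option linter.unusedSectionVars false

/-- The interleaved realification of a complex matrix: `ℂ⁵` is identified with `ℝ¹⁰` via
the real basis `e₁, ie₁, …, e₅, ie₅` (so rows/columns are indexed by pairs `(j, s)` with
`s = 0` the real direction and `s = 1` the imaginary direction), and
`r(U)_{(j,0),(k,0)} = Re U_{jk}`, `r(U)_{(j,0),(k,1)} = -Im U_{jk}`,
`r(U)_{(j,1),(k,0)} = Im U_{jk}`, `r(U)_{(j,1),(k,1)} = Re U_{jk}`. -/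
def interleave {m : Type*} (U : Matrix m m ℂ) : Matrix (m × Fin 2) (m × Fin 2) ℝ :=
  Matrix.of fun p q =>
    if p.2 = 0 then
      (if q.2 = 0 then (U p.1 q.1).re else -(U p.1 q.1).im)
    else
      (if q.2 = 0 then (U p.1 q.1).im else (U p.1 q.1).re)

/-- The equivalence distributing the `2 + 3` splitting of the complex coordinates over
the real/imaginary directions, exhibiting the `4 + 6` splitting of `ℝ¹⁰`. -/
def splitIdx : (Fin 2 ⊕ Fin 3) × Fin 2 ≃ (Fin 2 × Fin 2) ⊕ (Fin 3 × Fin 2) :=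
  Equiv.sumProdDistrib (Fin 2) (Fin 3) (Fin 2)

section AuxLemmas

variable {m : Type*} [Fintype m] [DecidableEq m]

theorem interleave_one : interleave (1 : Matrix m m ℂ) = 1 := by
  ext ⟨j, s⟩ ⟨k, t⟩
  fin_cases s <;> fin_cases t <;>
    simp [interleave, Matrix.one_apply, Prod.ext_iff, apply_ite Complex.re,
      apply_ite Complex.im]

theorem interleave_mul (U V : Matrix m m ℂ) :
    interleave (U * V) = interleave U * interleave V := by
  ext ⟨j, s⟩ ⟨k, t⟩
  fin_cases s <;> fin_cases t <;>
    simp only [interleave, Matrix.mul_apply, of_apply, Fintype.sum_prod_type,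
      Fin.sum_univ_two, Complex.re_sum, Complex.im_sum, Complex.mul_re, Complex.mul_im,
      ← Finset.sum_add_distrib, ← Finset.sum_sub_distrib, ← Finset.sum_neg_distrib,
      if_true, if_false, Fin.isValue, reduceIte] <;>
    exact Finset.sum_congr rfl fun l _ => by norm_num [Fin.ext_iff]; ring

theorem interleave_star (U : Matrix m m ℂ) :
    interleave (star U) = star (interleave U) := by
  ext ⟨j, s⟩ ⟨k, t⟩
  fin_cases s <;> fin_cases t <;>
    simp [interleave, Matrix.star_apply, Matrix.conjTranspose_apply, Complex.star_def]

/-- Index equivalence `m × Fin 2 ≃ m ⊕ m`. -/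
def e2 (m : Type*) : m × Fin 2 ≃ m ⊕ m where
  toFun p := if p.2 = 0 then Sum.inl p.1 else Sum.inr p.1
  invFun := Sum.elim (fun j => (j, 0)) (fun j => (j, 1))
  left_inv := by rintro ⟨j, s⟩; fin_cases s <;> simp
  right_inv := by rintro (j | j) <;> simp

/-- The change-of-basis matrix diagonalizing each real `2 × 2` rotation block. -/
def Smat (m : Type*) [DecidableEq m] : Matrix (m × Fin 2) (m × Fin 2) ℂ :=
  Matrix.of fun p q =>
    if p.1 = q.1 then
      (if p.2 = 0 then 1 else if q.2 = 0 then -Complex.I else Complex.I)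
    else 0

/-- The inverse of `Smat`. -/
def Sinvmat (m : Type*) [DecidableEq m] : Matrix (m × Fin 2) (m × Fin 2) ℂ :=
  Matrix.of fun p q =>
    if p.1 = q.1 then
      (if q.2 = 0 then (1 / 2 : ℂ) else if p.2 = 0 then Complex.I / 2 else -Complex.I / 2)
    else 0

/-- The block matrix `diag(U, conj U)` in interleaved indexing. -/
def Dmat {m : Type*} (U : Matrix m m ℂ) : Matrix (m × Fin 2) (m × Fin 2) ℂ :=
  Matrix.of fun p q =>
    if p.2 = q.2 then (if p.2 = 0 then U p.1 q.1 else star (U p.1 q.1)) else 0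

theorem S_mul_Sinv : Smat m * Sinvmat m = 1 := by
  ext ⟨j, s⟩ ⟨k, t⟩
  rw [Matrix.mul_apply]
  rw [Fintype.sum_prod_type]
  simp only [Smat, Sinvmat, of_apply, Matrix.one_apply, Prod.ext_iff]
  rw [Finset.sum_eq_single j]
  · fin_cases s <;> fin_cases t <;> by_cases h : j = k <;>
      simp [h, Fin.sum_univ_two, Complex.ext_iff] <;> norm_num
  · intro b _ hb
    simp [hb, Ne.symm hb]
  · simp

theorem interleave_key (U : Matrix m m ℂ) :
    (interleave U).map (Complex.ofReal) * Smat m = Smat m * Dmat U := by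
  ext ⟨j, s⟩ ⟨k, t⟩
  rw [Matrix.mul_apply, Matrix.mul_apply, Fintype.sum_prod_type, Fintype.sum_prod_type]
  simp only [Smat, Dmat, interleave, Matrix.map_apply, of_apply]
  rw [Finset.sum_eq_single k (fun b _ hb => by simp [hb]) (by simp),
      Finset.sum_eq_single j (fun b _ hb => by simp [hb, Ne.symm hb]) (by simp)]
  fin_cases s <;> fin_cases t <;>
    simp [Fin.sum_univ_two, Complex.ext_iff]

theorem det_Dmat (U : Matrix m m ℂ) :
    (Dmat U).det = U.det * star U.det := by
  have hD : Dmat U =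
      (Matrix.fromBlocks U 0 0 (U.map (starRingEnd ℂ))).submatrix (e2 m) (e2 m) := by
    ext ⟨j, s⟩ ⟨k, t⟩
    fin_cases s <;> fin_cases t <;>
      simp [Dmat, e2, Matrix.fromBlocks, Complex.star_def]
  rw [hD, Matrix.det_submatrix_equiv_self, Matrix.det_fromBlocks_zero₂₁]
  congr 1
  exact (RingHom.map_det (starRingEnd ℂ) U).symm

theorem det_interleave_map (U : Matrix m m ℂ) :
    ((interleave U).det : ℂ) = U.det * star U.det := by
  have h1 : ((interleave U).map (Complex.ofReal)).det * (Smat m).det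
      = (Smat m).det * (Dmat U).det := by
    rw [← Matrix.det_mul, ← Matrix.det_mul, interleave_key]
  have hS : IsUnit (Smat m).det :=
    Matrix.isUnit_det_of_right_inverse S_mul_Sinv
  rw [mul_comm] at h1
  have h2 := mul_left_cancel₀ hS.ne_zero h1
  rw [det_Dmat] at h2
  rw [← h2]
  exact RingHom.map_det Complex.ofRealHom (interleave U)

theorem interleave_mem_SO (A : Matrix m m ℂ) (hA : A ∈ Matrix.unitaryGroup m ℂ) :
    interleave A ∈ Matrix.specialOrthogonalGroup (m × Fin 2) ℝ := by
  rw [Matrix.mem_specialOrthogonalGroup_iff]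
  constructor
  · rw [Matrix.mem_orthogonalGroup_iff, ← Matrix.conjTranspose_eq_transpose_of_trivial,
      ← Matrix.star_eq_conjTranspose, ← interleave_star, ← interleave_mul,
      Matrix.mem_unitaryGroup_iff.mp hA, interleave_one]
  · have h1 : A.det * star A.det = 1 := by
      have h := congrArg Matrix.det (Matrix.mem_unitaryGroup_iff.mp hA)
      rwa [Matrix.det_mul, Matrix.star_eq_conjTranspose, Matrix.det_conjTranspose,
        Matrix.det_one] at h
    have h2 := det_interleave_map A
    rw [h1] at h2
    exact_mod_cast h2

end AuxLemmas

theorem interleave_fromBlocks (A : Matrix (Fin 2) (Fin 2) ℂ) (B : Matrix (Fin 3) (Fin 3) ℂ) :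
    interleave (Matrix.fromBlocks A 0 0 B) =
      Matrix.reindex splitIdx.symm splitIdx.symm
        (Matrix.fromBlocks (interleave A) 0 0 (interleave B)) := by
  ext ⟨j, s⟩ ⟨k, t⟩
  rcases j with j | j <;> rcases k with k | k <;> fin_cases s <;> fin_cases t <;>
    simp [interleave, splitIdx, Matrix.fromBlocks, Equiv.sumProdDistrib,
      Matrix.reindex_apply, Matrix.submatrix_apply]

/-- STATEMENT 15: inside `SO(10)`, the intersection of the image `r(SU(5))` of the
interleaved realification with the block diagonal subgroup
`{diag(P, Q) : P ∈ SO(4), Q ∈ SO(6)}` equals `r(S(U(2) × U(3)))`: the image of the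
Standard Model gauge group modulo its `ℤ/6` kernel is exactly the intersection of
`SU(5)` and `SO(4) × SO(6)` inside `SO(10)`. Here `ℂ⁵ = ℂ² ⊕ ℂ³` and
`ℝ¹⁰ = ℝ⁴ ⊕ ℝ⁶` accordingly. -/
theorem su5_meet_so4xso6_eq_standardModel :
    {M : Matrix ((Fin 2 ⊕ Fin 3) × Fin 2) ((Fin 2 ⊕ Fin 3) × Fin 2) ℝ |
        ∃ U ∈ Matrix.specialUnitaryGroup (Fin 2 ⊕ Fin 3) ℂ, M = interleave U} ∩
    {M | ∃ P ∈ Matrix.specialOrthogonalGroup (Fin 2 × Fin 2) ℝ,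
         ∃ Q ∈ Matrix.specialOrthogonalGroup (Fin 3 × Fin 2) ℝ,
          M = Matrix.reindex splitIdx.symm splitIdx.symm (Matrix.fromBlocks P 0 0 Q)} =
    {M | ∃ (A : Matrix (Fin 2) (Fin 2) ℂ) (B : Matrix (Fin 3) (Fin 3) ℂ),
          A ∈ Matrix.unitaryGroup (Fin 2) ℂ ∧ B ∈ Matrix.unitaryGroup (Fin 3) ℂ ∧
          A.det * B.det = 1 ∧ M = interleave (Matrix.fromBlocks A 0 0 B)} := by
  ext M
  simp only [Set.mem_inter_iff, Set.mem_setOf_eq]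
  constructor
  · rintro ⟨⟨U, hU, rfl⟩, P, hP, Q, hQ, hM⟩
    obtain ⟨hUu, hUd⟩ := Matrix.mem_specialUnitaryGroup_iff.mp hU
    have hoff12 : U.toBlocks₁₂ = 0 := by
      ext j k
      have h0 := congrFun (congrFun hM (Sum.inl j, 0)) (Sum.inr k, 0)
      have h1 := congrFun (congrFun hM (Sum.inl j, 1)) (Sum.inr k, 0)
      simp [interleave, splitIdx, Equiv.sumProdDistrib, Matrix.reindex_apply,
        Matrix.submatrix_apply, Matrix.fromBlocks] at h0 h1
      simp [Matrix.toBlocks₁₂, Complex.ext_iff, h0, h1]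
    have hoff21 : U.toBlocks₂₁ = 0 := by
      ext j k
      have h0 := congrFun (congrFun hM (Sum.inr j, 0)) (Sum.inl k, 0)
      have h1 := congrFun (congrFun hM (Sum.inr j, 1)) (Sum.inl k, 0)
      simp [interleave, splitIdx, Equiv.sumProdDistrib, Matrix.reindex_apply,
        Matrix.submatrix_apply, Matrix.fromBlocks] at h0 h1
      simp [Matrix.toBlocks₂₁, Complex.ext_iff, h0, h1]
    have hUeq : U = Matrix.fromBlocks U.toBlocks₁₁ 0 0 U.toBlocks₂₂ := by
      conv_lhs => rw [← Matrix.fromBlocks_toBlocks U]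
      rw [hoff12, hoff21]
    refine ⟨U.toBlocks₁₁, U.toBlocks₂₂, ?_, ?_, ?_, by rw [← hUeq]⟩
    · rw [Matrix.mem_unitaryGroup_iff']
      have h := Matrix.mem_unitaryGroup_iff'.mp hUu
      rw [hUeq, Matrix.star_eq_conjTranspose, Matrix.fromBlocks_conjTranspose] at h
      rw [Matrix.fromBlocks_multiply, ← Matrix.fromBlocks_one] at h
      have h11 := congrArg Matrix.toBlocks₁₁ h
      rw [Matrix.toBlocks_fromBlocks₁₁, Matrix.toBlocks_fromBlocks₁₁] at h11
      simpa [Matrix.star_eq_conjTranspose] using h11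
    · rw [Matrix.mem_unitaryGroup_iff']
      have h := Matrix.mem_unitaryGroup_iff'.mp hUu
      rw [hUeq, Matrix.star_eq_conjTranspose, Matrix.fromBlocks_conjTranspose] at h
      rw [Matrix.fromBlocks_multiply, ← Matrix.fromBlocks_one] at h
      have h22 := congrArg Matrix.toBlocks₂₂ h
      rw [Matrix.toBlocks_fromBlocks₂₂, Matrix.toBlocks_fromBlocks₂₂] at h22
      simpa [Matrix.star_eq_conjTranspose] using h22
    · rw [hUeq, Matrix.det_fromBlocks_zero₂₁] at hUd
      exact hUd
  · rintro ⟨A, B, hA, hB, hdet, rfl⟩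
    refine ⟨⟨Matrix.fromBlocks A 0 0 B, ?_, rfl⟩,
      interleave A, interleave_mem_SO A hA,
      interleave B, interleave_mem_SO B hB, interleave_fromBlocks A B⟩
    rw [Matrix.mem_specialUnitaryGroup_iff]
    constructor
    · rw [Matrix.mem_unitaryGroup_iff', Matrix.star_eq_conjTranspose,
        Matrix.fromBlocks_conjTranspose, Matrix.fromBlocks_multiply]
      have hA' := Matrix.mem_unitaryGroup_iff'.mp hA
      have hB' := Matrix.mem_unitaryGroup_iff'.mp hB
      rw [Matrix.star_eq_conjTranspose] at hA' hB'
      simp [hA', hB', Matrix.fromBlocks_one]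
    · rw [Matrix.det_fromBlocks_zero₂₁]
      exact hdet
end
end
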